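/- arXiv:1009.6219 — 7 statements merged into one kernel-verified Lean document; each statement's English description precedes it below -/
import Mathlib

section
/- Let H and E be complex Hilbert spaces and let U be a unitary operator on the Hilbert space direct sum H ⊕ E with block decomposition U = [[A, B], [C, D]], where A : H → H, B : E → H, C : H → E, D : E → E are bounded linear operators (i.e. U(h, e) = (Ah + Be, Ch + De)). Let X be a bounded operator on H with ‖X‖ < 1. Then I_H − AX is invertible, and the bounded operator Q := D + C X (I_H − A X)^{-1} B on E satisfies the identity I_E − Q*Q = B* ((I_H − AX)^{-1})* (I_H − X*X) (I_H − AX)^{-1} B; consequently I_E − Q*Q is a positive operator and ‖Q‖ ≤ 1. -/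
/-!
Put `x := (1 - A X)⁻¹ B e`. Then `A X x + B e = x`, so `U (X x, e) = (x, Q e)`, and since `U`
preserves inner products, `⟪e, e'⟫ - ⟪Q e, Q e'⟫ = ⟪x, x'⟫ - ⟪X x, X x'⟫`; this is the claimed
operator identity. `A` is a corner of an isometry, so `‖A X‖ < 1` and `1 - A X` is invertible.
Finally `1 - T* T` is positive exactly when `‖T‖ ≤ 1`, which gives positivity of `1 - X* X`,
hence of its conjugate `1 - Q* Q`, hence `‖Q‖ ≤ 1`.
-/

open ContinuousLinearMap

section BlockDecomposition

variable {𝕜 H E H' E' : Type*} [RCLike 𝕜]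
  [NormedAddCommGroup H] [InnerProductSpace 𝕜 H] [NormedAddCommGroup E] [InnerProductSpace 𝕜 E]
  [NormedAddCommGroup H'] [InnerProductSpace 𝕜 H'] [NormedAddCommGroup E'] [InnerProductSpace 𝕜 E']

def IsBlockDecomposition (U : WithLp 2 (H × E) → WithLp 2 (H' × E'))
    (A : H → H') (B : E → H') (C : H → E') (D : E → E') : Prop :=
  ∀ h e, U ((WithLp.equiv 2 (H × E)).symm (h, e)) =
    (WithLp.equiv 2 (H' × E')).symm (A h + B e, C h + D e)

variable {U : WithLp 2 (H × E) →ₗᵢ[𝕜] WithLp 2 (H' × E')}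
  {A : H →L[𝕜] H'} {B : E →L[𝕜] H'} {C : H →L[𝕜] E'} {D : E →L[𝕜] E'}

theorem IsBlockDecomposition.inner_add_inner (hU : IsBlockDecomposition U A B C D)
    (h h' : H) (e e' : E) :
    inner 𝕜 (A h + B e) (A h' + B e') + inner 𝕜 (C h + D e) (C h' + D e') =
      inner 𝕜 h h' + inner 𝕜 e e' := by
  have := U.inner_map_map ((WithLp.equiv 2 (H × E)).symm (h, e))
    ((WithLp.equiv 2 (H × E)).symm (h', e'))
  rw [hU, hU] at this
  simpa [WithLp.prod_inner_apply] using this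

theorem IsBlockDecomposition.opNorm_le_one (hU : IsBlockDecomposition U A B C D) : ‖A‖ ≤ 1 :=
  A.opNorm_le_bound zero_le_one fun h => by
    calc ‖A h‖ = ‖(U ((WithLp.equiv 2 (H × E)).symm (h, 0))).fst‖ := by rw [hU]; simp
      _ ≤ ‖U ((WithLp.equiv 2 (H × E)).symm (h, 0))‖ := WithLp.norm_fst_le _ _
      _ = 1 * ‖h‖ := by simp

theorem IsBlockDecomposition.one_sub_adjoint_comp_self_eq [CompleteSpace H] [CompleteSpace E]
    [CompleteSpace H'] [CompleteSpace E'] (hU : IsBlockDecomposition U A B C D)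
    {X : H' →L[𝕜] H} {R : H' →L[𝕜] H'} (hR : (1 - A ∘L X) ∘L R = 1) :
    1 - adjoint (D + C ∘L X ∘L R ∘L B) ∘L (D + C ∘L X ∘L R ∘L B) =
      adjoint (R ∘L B) ∘L (1 - adjoint X ∘L X) ∘L (R ∘L B) := by
  have hRB : ∀ e, A (X (R (B e))) + B e = R (B e) := fun e => by
    have := congr($hR (B e))
    simp only [comp_apply, sub_apply, one_apply_eq_self] at this
    exact (sub_eq_iff_eq_add'.mp this).symm
  ext e
  refine ext_inner_right 𝕜 fun e' => ?_
  have := hU.inner_add_inner (X (R (B e))) (X (R (B e'))) e e'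
  rw [hRB, hRB, add_comm (C _), add_comm (C _)] at this
  simp only [sub_apply, one_apply_eq_self, comp_apply, inner_sub_left, adjoint_inner_left,
    add_apply]
  linear_combination -this

end BlockDecomposition

section

variable {𝕜 E F : Type*} [RCLike 𝕜] [NormedAddCommGroup E] [InnerProductSpace 𝕜 E]
  [CompleteSpace E] [NormedAddCommGroup F] [InnerProductSpace 𝕜 F] [CompleteSpace F]

theorem reApplyInnerSelf_one_sub_adjoint_comp_self (T : E →L[𝕜] F) (x : E) :
    (1 - adjoint T ∘L T).reApplyInnerSelf x = ‖x‖ ^ 2 - ‖T x‖ ^ 2 := by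
  simp only [reApplyInnerSelf, sub_apply, one_apply_eq_self, comp_apply, inner_sub_left,
    adjoint_inner_left, map_sub, inner_self_eq_norm_sq]

theorem isPositive_one_sub_adjoint_comp_self_iff (T : E →L[𝕜] F) :
    (1 - adjoint T ∘L T).IsPositive ↔ ‖T‖ ≤ 1 := by
  have hsa : IsSelfAdjoint (1 - adjoint T ∘L T) :=
    (IsSelfAdjoint.one _).sub (isPositive_adjoint_comp_self T).isSelfAdjoint
  simp only [isPositive_def', hsa, true_and, reApplyInnerSelf_one_sub_adjoint_comp_self,
    sub_nonneg, opNorm_le_iff zero_le_one, one_mul]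
  exact forall_congr' fun x => pow_le_pow_iff_left₀ (norm_nonneg _) (norm_nonneg _) two_ne_zero

end

/-- If `U = [[A, B], [C, D]]` is a unitary operator (surjective linear
isometry) on the Hilbert space direct sum `H ⊕ E` and `X` is an operator on `H` with
`‖X‖ < 1`, then `1 - A∘X` is invertible, and `Q := D + C X (1 - A X)⁻¹ B` satisfies
`1 - Q*Q = B* ((1 - AX)⁻¹)* (1 - X*X) (1 - AX)⁻¹ B`; hence `1 - Q*Q` is positive and
`‖Q‖ ≤ 1`. -/
theorem statement0
    {H E : Type} [NormedAddCommGroup H] [InnerProductSpace ℂ H] [CompleteSpace H]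
    [NormedAddCommGroup E] [InnerProductSpace ℂ E] [CompleteSpace E]
    (U : WithLp 2 (H × E) ≃ₗᵢ[ℂ] WithLp 2 (H × E))
    (A : H →L[ℂ] H) (B : E →L[ℂ] H) (C : H →L[ℂ] E) (D : E →L[ℂ] E)
    (hU : ∀ (h : H) (e : E),
      U ((WithLp.equiv 2 (H × E)).symm (h, e)) =
        (WithLp.equiv 2 (H × E)).symm (A h + B e, C h + D e))
    (X : H →L[ℂ] H) (hX : ‖X‖ < 1) :
    IsUnit (1 - A ∘L X) ∧
    (1 - adjoint (D + C ∘L X ∘L Ring.inverse (1 - A ∘L X) ∘L B) ∘L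
        (D + C ∘L X ∘L Ring.inverse (1 - A ∘L X) ∘L B) =
      adjoint B ∘L adjoint (Ring.inverse (1 - A ∘L X)) ∘L
        (1 - adjoint X ∘L X) ∘L Ring.inverse (1 - A ∘L X) ∘L B) ∧
    (1 - adjoint (D + C ∘L X ∘L Ring.inverse (1 - A ∘L X) ∘L B) ∘L
        (D + C ∘L X ∘L Ring.inverse (1 - A ∘L X) ∘L B)).IsPositive ∧
    ‖D + C ∘L X ∘L Ring.inverse (1 - A ∘L X) ∘L B‖ ≤ 1 := by
  have hblocks : IsBlockDecomposition U.toLinearIsometry A B C D := hU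
  have hAX : ‖A ∘L X‖ < 1 := (opNorm_comp_le A X).trans_lt
    (mul_lt_one_of_nonneg_of_lt_one_right hblocks.opNorm_le_one (norm_nonneg X) hX)
  have hunit : IsUnit (1 - A ∘L X) := isUnit_one_sub_of_norm_lt_one hAX
  have hid := hblocks.one_sub_adjoint_comp_self_eq (Ring.mul_inverse_cancel _ hunit)
  have hpos := hid ▸ ((isPositive_one_sub_adjoint_comp_self_iff X).2 hX.le).adjoint_conj
    (Ring.inverse (1 - A ∘L X) ∘L B)
  refine ⟨hunit, ?_, hpos, (isPositive_one_sub_adjoint_comp_self_iff _).1 hpos⟩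
  rw [hid, adjoint_comp, comp_assoc]
end

section
/- Let v₁ = (1/√3)(0, −1, 1, 1, 0), v₂ = (1/√3)(0, 1, −1, 1, 0), v₃ = (1/√3)(0, 1, 1, −1, 0) ∈ ℂ⁵, and for j = 1, 2, 3 let T_j ∈ M₅(ℂ) be the matrix whose (j+1, 1) entry is 1, whose fifth row equals v_j (i.e. (T_j)_{5,k} = (v_j)_k for k = 1, …, 5), and whose all other entries are 0. Then for every positive integer m and all matrices A₁, A₂, A₃ ∈ M_m(ℂ) such that ‖z₁A₁ + z₂A₂ + z₃A₃‖ ≤ 1 for all z ∈ ℂ³ with |z₁| ≤ 1, |z₂| ≤ 1, |z₃| ≤ 1, one has ‖A₁ ⊗ T₁ + A₂ ⊗ T₂ + A₃ ⊗ T₃‖ ≤ 1, where ⊗ denotes the Kronecker (tensor) product of matrices. -/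
/-!
Write a vector of `ℂᵐ ⊗ ℂ⁵` as `vec X`, with blocks `xₗ = X.row l`. Then
`∑ⱼ (Aⱼ ⊗ Tⱼ) (vec X)` has the blocks `0, A₁x₀, A₂x₀, A₃x₀` and `3^(-1/2) (B₁x₁ + B₂x₂ + B₃x₃)`,
where `B₁ = -A₁ + A₂ + A₃`, `B₂ = A₁ - A₂ + A₃`, `B₃ = A₁ + A₂ - A₃`.
Averaging `‖A₁x ± A₂x ± A₃x‖² ≤ ‖x‖²` over the four sign choices gives, by the parallelogram law,
`∑ⱼ ‖Aⱼx₀‖² ≤ ‖x₀‖²`; and since every `Bⱼ` is a contraction,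
`‖B₁x₁ + B₂x₂ + B₃x₃‖² ≤ (‖x₁‖ + ‖x₂‖ + ‖x₃‖)² ≤ 3 (‖x₁‖² + ‖x₂‖² + ‖x₃‖²)`.
-/

open Matrix
open scoped Kronecker

/-- The operator norm of a complex matrix, induced by the Euclidean (ℓ²) norms. -/
noncomputable def l2OpNorm {m n : Type} [Fintype m] [Fintype n] [DecidableEq n]
    (M : Matrix m n ℂ) : ℝ :=
  ‖LinearMap.toContinuousLinearMap (Matrix.toEuclideanLin M)‖

/-- The Kaijser–Varopoulos matrices `T₁, T₂, T₃`. -/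
noncomputable def KV.c : ℂ := (Real.sqrt 3 : ℂ)⁻¹

noncomputable def KV.T₁ : Matrix (Fin 5) (Fin 5) ℂ :=
  !![0, 0, 0, 0, 0;
     1, 0, 0, 0, 0;
     0, 0, 0, 0, 0;
     0, 0, 0, 0, 0;
     0, -KV.c, KV.c, KV.c, 0]

noncomputable def KV.T₂ : Matrix (Fin 5) (Fin 5) ℂ :=
  !![0, 0, 0, 0, 0;
     0, 0, 0, 0, 0;
     1, 0, 0, 0, 0;
     0, 0, 0, 0, 0;
     0, KV.c, -KV.c, KV.c, 0]

noncomputable def KV.T₃ : Matrix (Fin 5) (Fin 5) ℂ :=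
  !![0, 0, 0, 0, 0;
     0, 0, 0, 0, 0;
     0, 0, 0, 0, 0;
     1, 0, 0, 0, 0;
     0, KV.c, KV.c, -KV.c, 0]

open WithLp

lemma l2OpNorm_eq_norm_toEuclideanCLM {n : Type} [Fintype n] [DecidableEq n]
    (A : Matrix n n ℂ) : l2OpNorm A = ‖toEuclideanCLM (𝕜 := ℂ) A‖ :=
  rfl

lemma parallelogram_law_with_norm_three (𝕜 : Type*) {F : Type*} [RCLike 𝕜]
    [NormedAddCommGroup F] [InnerProductSpace 𝕜 F] (u₁ u₂ u₃ : F) :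
    ‖u₁ + u₂ + u₃‖ ^ 2 + ‖u₁ + u₂ - u₃‖ ^ 2 + ‖u₁ - u₂ + u₃‖ ^ 2 + ‖u₁ - u₂ - u₃‖ ^ 2 =
      4 * (‖u₁‖ ^ 2 + ‖u₂‖ ^ 2 + ‖u₃‖ ^ 2) := by
  linarith [parallelogram_law_with_norm 𝕜 (u₁ + u₂) u₃, parallelogram_law_with_norm 𝕜 (u₁ - u₂) u₃,
    parallelogram_law_with_norm 𝕜 u₁ u₂]

section Contraction

variable {𝕜 E F : Type*} [NontriviallyNormedField 𝕜] [NormedAddCommGroup E] [NormedSpace 𝕜 E]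
  [NormedAddCommGroup F] [NormedSpace 𝕜 F]

/-- `(a₁, a₂, a₃)` lies in the closed unit ball of `MIN(ℓ¹₃) ⊗ L(E, F)`. -/
def PolydiskContractive (a₁ a₂ a₃ : E →L[𝕜] F) : Prop :=
  ∀ z₁ z₂ z₃ : 𝕜, ‖z₁‖ ≤ 1 → ‖z₂‖ ≤ 1 → ‖z₃‖ ≤ 1 → ‖z₁ • a₁ + z₂ • a₂ + z₃ • a₃‖ ≤ 1

lemma norm_apply_add_apply_add_apply_sq_le {b₁ b₂ b₃ : E →L[𝕜] F} (h₁ : ‖b₁‖ ≤ 1)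
    (h₂ : ‖b₂‖ ≤ 1) (h₃ : ‖b₃‖ ≤ 1) (y₁ y₂ y₃ : E) :
    ‖b₁ y₁ + b₂ y₂ + b₃ y₃‖ ^ 2 ≤ 3 * (‖y₁‖ ^ 2 + ‖y₂‖ ^ 2 + ‖y₃‖ ^ 2) := by
  have hb {b : E →L[𝕜] F} (hb : ‖b‖ ≤ 1) (y : E) : ‖b y‖ ≤ ‖y‖ := by
    simpa using b.le_of_opNorm_le hb y
  have htri : ‖b₁ y₁ + b₂ y₂ + b₃ y₃‖ ≤ ‖y₁‖ + ‖y₂‖ + ‖y₃‖ :=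
    norm_add₃_le.trans (add_le_add_three (hb h₁ y₁) (hb h₂ y₂) (hb h₃ y₃))
  nlinarith [norm_nonneg (b₁ y₁ + b₂ y₂ + b₃ y₃), sq_nonneg (‖y₁‖ - ‖y₂‖),
    sq_nonneg (‖y₁‖ - ‖y₃‖), sq_nonneg (‖y₂‖ - ‖y₃‖)]

end Contraction

lemma PolydiskContractive.norm_sq_add_norm_sq_add_norm_sq_le {𝕜 E F : Type*} [RCLike 𝕜]
    [NormedAddCommGroup E] [NormedSpace 𝕜 E] [NormedAddCommGroup F] [InnerProductSpace 𝕜 F]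
    {a₁ a₂ a₃ : E →L[𝕜] F} (h : PolydiskContractive a₁ a₂ a₃) (x : E) :
    ‖a₁ x‖ ^ 2 + ‖a₂ x‖ ^ 2 + ‖a₃ x‖ ^ 2 ≤ ‖x‖ ^ 2 := by
  have hsign (z₂ z₃ : 𝕜) (h₂ : ‖z₂‖ ≤ 1) (h₃ : ‖z₃‖ ≤ 1) :
      ‖a₁ x + z₂ • a₂ x + z₃ • a₃ x‖ ^ 2 ≤ ‖x‖ ^ 2 := by
    have := (1 • a₁ + z₂ • a₂ + z₃ • a₃).le_of_opNorm_le (h 1 z₂ z₃ (by simp) h₂ h₃) x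
    gcongr
    simpa using this
  have := hsign 1 1 (by simp) (by simp)
  have := hsign 1 (-1) (by simp) (by simp)
  have := hsign (-1) 1 (by simp) (by simp)
  have := hsign (-1) (-1) (by simp) (by simp)
  simp only [one_smul, neg_smul, ← sub_eq_add_neg] at *
  linarith [parallelogram_law_with_norm_three 𝕜 (a₁ x) (a₂ x) (a₃ x)]

lemma EuclideanSpace.norm_sq_toLp_vec {𝕜 m n : Type*} [RCLike 𝕜] [Fintype m] [Fintype n]
    (X : Matrix m n 𝕜) :
    ‖(toLp 2 (vec X) : EuclideanSpace 𝕜 (n × m))‖ ^ 2 =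
      ∑ i, ‖(toLp 2 (X.row i) : EuclideanSpace 𝕜 n)‖ ^ 2 := by
  simp only [EuclideanSpace.norm_sq_eq, Fintype.sum_prod_type_right, vec, row_apply]

lemma Matrix.mul_mul_transpose_apply {R l m n : Type*} [CommSemiring R] [Fintype m] [Fintype n]
    (T : Matrix l m R) (X : Matrix m n R) (A : Matrix n n R) (j : l) :
    (T * X * Aᵀ) j = ∑ k, T j k • A *ᵥ X.row k := by
  ext i
  simp only [row_apply, mul_apply, Finset.sum_mul, mulVec, dotProduct, Finset.sum_apply,
    Pi.smul_apply, smul_eq_mul, Finset.mul_sum, mul_assoc, mul_comm (A i _)]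
  exact Finset.sum_comm

namespace KV

lemma norm_c_sq : ‖c‖ ^ 2 = 3⁻¹ := by
  rw [c, norm_inv, Complex.norm_real, Real.norm_of_nonneg (Real.sqrt_nonneg 3), inv_pow,
    Real.sq_sqrt zero_le_three]

lemma kronecker_mulVec_vec {n : Type} [Fintype n] (A₁ A₂ A₃ : Matrix n n ℂ)
    (X : Matrix (Fin 5) n ℂ) :
    (A₁ ⊗ₖ T₁ + A₂ ⊗ₖ T₂ + A₃ ⊗ₖ T₃) *ᵥ vec X =
      vec (of ![0, A₁ *ᵥ X.row 0, A₂ *ᵥ X.row 0, A₃ *ᵥ X.row 0,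
        c • ((-A₁ + A₂ + A₃) *ᵥ X.row 1 + (A₁ - A₂ + A₃) *ᵥ X.row 2 +
          (A₁ + A₂ - A₃) *ᵥ X.row 3)]) := by
  simp only [add_mulVec, Matrix.kronecker_mulVec_vec, ← vec_add]
  congr 1
  ext j : 1
  simp only [Matrix.add_apply, Matrix.mul_mul_transpose_apply]
  fin_cases j <;> simp [Fin.sum_univ_five, T₁, T₂, T₃, add_mulVec, sub_mulVec, neg_mulVec]
  ring

lemma norm_sq_kronecker_mulVec_vec {n : Type} [Fintype n] (A₁ A₂ A₃ : Matrix n n ℂ)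
    (X : Matrix (Fin 5) n ℂ) :
    ‖(toLp 2 ((A₁ ⊗ₖ T₁ + A₂ ⊗ₖ T₂ + A₃ ⊗ₖ T₃) *ᵥ vec X) : EuclideanSpace ℂ (n × Fin 5))‖ ^ 2 =
      ‖toLp 2 (A₁ *ᵥ X.row 0)‖ ^ 2 + ‖toLp 2 (A₂ *ᵥ X.row 0)‖ ^ 2 +
        ‖toLp 2 (A₃ *ᵥ X.row 0)‖ ^ 2 +
        ‖toLp 2 ((-A₁ + A₂ + A₃) *ᵥ X.row 1 + (A₁ - A₂ + A₃) *ᵥ X.row 2 +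
          (A₁ + A₂ - A₃) *ᵥ X.row 3)‖ ^ 2 / 3 := by
  rw [kronecker_mulVec_vec, EuclideanSpace.norm_sq_toLp_vec, Fin.sum_univ_five]
  simp only [of_row, cons_val_zero, cons_val_one, cons_val, toLp_zero, norm_zero, toLp_smul,
    norm_smul, mul_pow, norm_c_sq]
  ring

end KV

theorem statement4_general
    (m : ℕ) (A₁ A₂ A₃ : Matrix (Fin m) (Fin m) ℂ)
    (hA : ∀ z₁ z₂ z₃ : ℂ, ‖z₁‖ ≤ 1 → ‖z₂‖ ≤ 1 → ‖z₃‖ ≤ 1 →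
      l2OpNorm (z₁ • A₁ + z₂ • A₂ + z₃ • A₃) ≤ 1) :
    l2OpNorm (A₁ ⊗ₖ KV.T₁ + A₂ ⊗ₖ KV.T₂ + A₃ ⊗ₖ KV.T₃) ≤ 1 := by
  have hP : PolydiskContractive (toEuclideanCLM (𝕜 := ℂ) A₁) (toEuclideanCLM (𝕜 := ℂ) A₂)
      (toEuclideanCLM (𝕜 := ℂ) A₃) := by
    simpa [PolydiskContractive, l2OpNorm_eq_norm_toEuclideanCLM] using hA
  have hB₁ : l2OpNorm (-A₁ + A₂ + A₃) ≤ 1 := by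
    simpa using hA (-1) 1 1 (by simp) (by simp) (by simp)
  have hB₂ : l2OpNorm (A₁ - A₂ + A₃) ≤ 1 := by
    simpa [sub_eq_add_neg] using hA 1 (-1) 1 (by simp) (by simp) (by simp)
  have hB₃ : l2OpNorm (A₁ + A₂ - A₃) ≤ 1 := by
    simpa [sub_eq_add_neg] using hA 1 1 (-1) (by simp) (by simp) (by simp)
  rw [l2OpNorm_eq_norm_toEuclideanCLM] at hB₁ hB₂ hB₃ ⊢
  refine ContinuousLinearMap.opNorm_le_bound _ zero_le_one fun v => ?_
  obtain ⟨X, rfl⟩ : ∃ X : Matrix (Fin 5) (Fin m) ℂ, v = toLp 2 (vec X) :=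
    ⟨of fun l k => v (k, l), rfl⟩
  have hrow := hP.norm_sq_add_norm_sq_add_norm_sq_le (toLp 2 (X.row 0))
  have hcol := norm_apply_add_apply_add_apply_sq_le hB₁ hB₂ hB₃
    (toLp 2 (X.row 1)) (toLp 2 (X.row 2)) (toLp 2 (X.row 3))
  simp only [toEuclideanCLM_toLp, ← toLp_add] at hrow hcol
  rw [one_mul, ← sq_le_sq₀ (norm_nonneg _) (norm_nonneg _), toEuclideanCLM_toLp,
    KV.norm_sq_kronecker_mulVec_vec, EuclideanSpace.norm_sq_toLp_vec, Fin.sum_univ_five]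
  linarith [sq_nonneg ‖toLp 2 (X.row 4)‖]

/-- The Kaijser–Varopoulos contractions are completely contractive for
`MIN(ℓ¹₃)`: if `‖z₁A₁ + z₂A₂ + z₃A₃‖ ≤ 1` for all `z` in the closed polydisk, then
`‖A₁ ⊗ T₁ + A₂ ⊗ T₂ + A₃ ⊗ T₃‖ ≤ 1`. -/
theorem statement4
    (m : ℕ) (hm : 0 < m) (A₁ A₂ A₃ : Matrix (Fin m) (Fin m) ℂ)
    (hA : ∀ z₁ z₂ z₃ : ℂ, ‖z₁‖ ≤ 1 → ‖z₂‖ ≤ 1 → ‖z₃‖ ≤ 1 →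
      l2OpNorm (z₁ • A₁ + z₂ • A₂ + z₃ • A₃) ≤ 1) :
    l2OpNorm (A₁ ⊗ₖ KV.T₁ + A₂ ⊗ₖ KV.T₂ + A₃ ⊗ₖ KV.T₃) ≤ 1 :=
  statement4_general m A₁ A₂ A₃ hA
end

section
/- Let v₁ = (1/√3)(0, −1, 1, 1, 0), v₂ = (1/√3)(0, 1, −1, 1, 0), v₃ = (1/√3)(0, 1, 1, −1, 0) ∈ ℂ⁵, and for j = 1, 2, 3 let T_j ∈ M₅(ℂ) be the matrix whose (j+1, 1) entry is 1, whose fifth row equals v_j (i.e. (T_j)_{5,k} = (v_j)_k for k = 1, …, 5), and whose all other entries are 0. Then the matrices T₁, T₂, T₃ pairwise commute (T_i T_j = T_j T_i for all i, j) and each satisfies ‖T_j‖ = 1. -/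
open Matrix
open scoped Kronecker

/-!
For `i ≠ j` the product `T_i T_j` sends `e₁` to `(v_i)_{j+1} e₅` and kills everything else, so
commutation amounts to the symmetry of the array `((v_i)_{j+1})`, which is `c` off the diagonal.
For the norms, the two nonzero rows of `T_j`, namely `e₁` and `v_j`, are orthonormal, so
`T_j T_jᴴ` is a nonzero orthogonal projection; the C⋆-identity `‖T‖² = ‖T Tᴴ‖` then gives
`‖T_j‖ = 1`.
-/

open scoped Matrix.Norms.L2Operator

theorem IsStarProjection.norm_eq_one {E : Type*} [NonUnitalNormedRing E] [StarRing E]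
    [CStarRing E] {e : E} (he : IsStarProjection e) (h : e ≠ 0) : ‖e‖ = 1 := by
  have : ‖e‖ * (‖e‖ - 1) = 0 := by
    simp [mul_sub, ← CStarRing.norm_star_mul_self, he.isSelfAdjoint.star_eq,
      he.isIdempotentElem.eq]
  simpa [norm_ne_zero_iff.mpr h, sub_eq_zero] using this

theorem CStarRing.norm_eq_one_of_isIdempotentElem_mul_star {E : Type*} [NonUnitalNormedRing E]
    [StarRing E] [CStarRing E] {a : E} (ha : a ≠ 0) (h : IsIdempotentElem (a * star a)) :
    ‖a‖ = 1 := by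
  have hne : a * star a ≠ 0 := by
    rw [← norm_ne_zero_iff, CStarRing.norm_self_mul_star]
    positivity
  have := IsStarProjection.norm_eq_one ⟨h, .mul_star_self a⟩ hne
  rw [CStarRing.norm_self_mul_star, mul_self_eq_one_iff] at this
  exact this.resolve_right (by linarith [norm_nonneg a])

theorem Matrix.l2_opNorm_eq_one_of_mul_conjTranspose_eq_diagonal {𝕜 n : Type*} [RCLike 𝕜]
    [Fintype n] [DecidableEq n] {T : Matrix n n 𝕜} {d : n → 𝕜} (hT : T * Tᴴ = diagonal d)
    (hd : ∀ i, d i = 0 ∨ d i = 1) (hd₁ : ∃ i, d i = 1) : ‖T‖ = 1 := by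
  have hT₀ : T ≠ 0 := by
    rintro rfl
    obtain ⟨i, hi⟩ := hd₁
    simpa [hi] using congrFun (congrFun hT i) i
  refine CStarRing.norm_eq_one_of_isIdempotentElem_mul_star hT₀ ?_
  rw [star_eq_conjTranspose, hT, IsIdempotentElem, diagonal_mul_diagonal]
  congr 1
  ext i
  rcases hd i with h | h <;> simp [h]

namespace KV

lemma c_mul_c_add_c_mul_c_add_c_mul_c : c * c + c * c + c * c = 1 := by
  have hc : c * c = 3⁻¹ := by
    rw [c, ← mul_inv, ← Complex.ofReal_mul, Real.mul_self_sqrt (by norm_num)]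
    norm_num
  rw [hc]
  norm_num

lemma conj_c : starRingEnd ℂ c = c := by
  simp [c, ← Complex.ofReal_inv, Complex.conj_ofReal]

lemma commute_T₁_T₂ : Commute T₁ T₂ := by
  ext i j
  fin_cases i <;> fin_cases j <;> simp [T₁, T₂, mul_apply, Fin.sum_univ_five]

lemma commute_T₁_T₃ : Commute T₁ T₃ := by
  ext i j
  fin_cases i <;> fin_cases j <;> simp [T₁, T₃, mul_apply, Fin.sum_univ_five]

lemma commute_T₂_T₃ : Commute T₂ T₃ := by
  ext i j
  fin_cases i <;> fin_cases j <;> simp [T₂, T₃, mul_apply, Fin.sum_univ_five]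

lemma T₁_mul_conjTranspose : T₁ * T₁ᴴ = diagonal ![0, 1, 0, 0, 1] := by
  ext i j
  fin_cases i <;> fin_cases j <;>
    simp [T₁, mul_apply, Fin.sum_univ_five, conj_c, c_mul_c_add_c_mul_c_add_c_mul_c]

lemma T₂_mul_conjTranspose : T₂ * T₂ᴴ = diagonal ![0, 0, 1, 0, 1] := by
  ext i j
  fin_cases i <;> fin_cases j <;>
    simp [T₂, mul_apply, Fin.sum_univ_five, conj_c, c_mul_c_add_c_mul_c_add_c_mul_c]

lemma T₃_mul_conjTranspose : T₃ * T₃ᴴ = diagonal ![0, 0, 0, 1, 1] := by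
  ext i j
  fin_cases i <;> fin_cases j <;>
    simp [T₃, mul_apply, Fin.sum_univ_five, conj_c, c_mul_c_add_c_mul_c_add_c_mul_c]

end KV

/-- The Kaijser–Varopoulos matrices `T₁, T₂, T₃` pairwise commute and
each has operator norm `1`. -/
theorem statement5 :
    (KV.T₁ * KV.T₂ = KV.T₂ * KV.T₁ ∧
     KV.T₁ * KV.T₃ = KV.T₃ * KV.T₁ ∧
     KV.T₂ * KV.T₃ = KV.T₃ * KV.T₂) ∧
    l2OpNorm KV.T₁ = 1 ∧ l2OpNorm KV.T₂ = 1 ∧ l2OpNorm KV.T₃ = 1 := by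
  refine ⟨⟨KV.commute_T₁_T₂.eq, KV.commute_T₁_T₃.eq, KV.commute_T₂_T₃.eq⟩, ?_, ?_, ?_⟩
  -- `l2OpNorm M` unfolds to `‖M‖` for the scoped instance `Matrix.Norms.L2Operator`.
  · exact Matrix.l2_opNorm_eq_one_of_mul_conjTranspose_eq_diagonal KV.T₁_mul_conjTranspose
      (by simp [Fin.forall_fin_succ]) ⟨4, rfl⟩
  · exact Matrix.l2_opNorm_eq_one_of_mul_conjTranspose_eq_diagonal KV.T₂_mul_conjTranspose
      (by simp [Fin.forall_fin_succ]) ⟨4, rfl⟩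
  · exact Matrix.l2_opNorm_eq_one_of_mul_conjTranspose_eq_diagonal KV.T₃_mul_conjTranspose
      (by simp [Fin.forall_fin_succ]) ⟨4, rfl⟩
end

section
/- Let n and m be positive integers and A₁, …, A_n ∈ M_m(ℂ). If ‖z₁A₁ + ⋯ + z_nA_n‖ ≤ 1 for every z ∈ ℂⁿ with |z_j| = 1 for all j, then the matrix I_m − (A₁*A₁ + ⋯ + A_n*A_n) is positive semidefinite. -/
/-!
Average over the sign vectors `s ∈ {±1}ⁿ`. The cross terms of `(∑ sⱼAⱼ)*(∑ sₖAₖ)` cancel in the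
average, so `∑ⱼ Aⱼ*Aⱼ` is the mean of the matrices `(∑ sⱼAⱼ)*(∑ sⱼAⱼ)`, each of which is `≤ 1`
in the Loewner order because `‖∑ sⱼAⱼ‖ ≤ 1` (C*-identity).
-/

open Matrix
open scoped ComplexOrder

open scoped MatrixOrder Matrix.Norms.L2Operator

section SignAveraging

variable {ι : Type*} [Fintype ι] [DecidableEq ι]

theorem sum_units_int_mul_eq_zero {j k : ι} (hjk : j ≠ k) :
    ∑ s : ι → ℤˣ, ((s j * s k : ℤˣ) : ℤ) = 0 := by
  set g : ι → ℤˣ := Pi.mulSingle j (-1)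
  have hflip (s : ι → ℤˣ) : (((g * s) j * (g * s) k : ℤˣ) : ℤ) = -((s j * s k : ℤˣ) : ℤ) := by
    simp [g, hjk.symm]
  have h := Equiv.sum_comp (Equiv.mulLeft g) fun s : ι → ℤˣ => ((s j * s k : ℤˣ) : ℤ)
  simp only [Equiv.coe_mulLeft, hflip, Finset.sum_neg_distrib] at h
  omega

theorem sum_star_mul_self_sum_units_zsmul {R : Type*} [NonUnitalRing R] [StarRing R]
    (a : ι → R) :
    ∑ s : ι → ℤˣ, star (∑ j, (s j : ℤ) • a j) * ∑ k, (s k : ℤ) • a k =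
      Fintype.card (ι → ℤˣ) • ∑ j, star (a j) * a j := by
  have hexpand (s : ι → ℤˣ) : star (∑ j, (s j : ℤ) • a j) * ∑ k, (s k : ℤ) • a k =
      ∑ j, ∑ k, ((s j * s k : ℤˣ) : ℤ) • (star (a j) * a k) := by
    simp only [star_sum, star_zsmul, Finset.sum_mul_sum, smul_mul_smul_comm, Units.val_mul]
  simp only [hexpand]
  rw [Finset.sum_comm, Finset.smul_sum]
  refine Finset.sum_congr rfl fun j _ => ?_
  rw [Finset.sum_comm, Finset.sum_eq_single j, ← Finset.sum_smul]
  · rw [← natCast_zsmul]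
    simp [Int.units_mul_self]
  · intro k _ hkj
    rw [← Finset.sum_smul, sum_units_int_mul_eq_zero hkj.symm, zero_smul]
  · simp

end SignAveraging

theorem Matrix.conjTranspose_mul_self_le_one_of_l2OpNorm_le_one {m : Type} [Fintype m]
    [DecidableEq m] {B : Matrix m m ℂ} (hB : l2OpNorm B ≤ 1) : Bᴴ * B ≤ 1 := by
  have hB' : ‖B‖ ≤ 1 := hB
  refine (CStarAlgebra.norm_le_one_iff_of_nonneg _ (star_mul_self_nonneg B)).mp ?_
  rw [star_eq_conjTranspose, l2_opNorm_conjTranspose_mul_self]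
  nlinarith [norm_nonneg B]

theorem Matrix.PosSemidef.of_nsmul {𝕜 m : Type*} [RCLike 𝕜] [Fintype m] {X : Matrix m m 𝕜}
    {k : ℕ} (hk : k ≠ 0) (h : (k • X).PosSemidef) : X.PosSemidef := by
  have := h.smul (a := (k : ℝ)⁻¹) (by positivity)
  rwa [← Nat.cast_smul_eq_nsmul ℝ, smul_smul, inv_mul_cancel₀ (by exact_mod_cast hk),
    one_smul] at this

theorem statement6_general
    (n m : ℕ) (A : Fin n → Matrix (Fin m) (Fin m) ℂ)
    (hA : ∀ z : Fin n → ℂ, (∀ j, ‖z j‖ = 1) →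
      l2OpNorm (∑ j, z j • A j) ≤ 1) :
    ((1 : Matrix (Fin m) (Fin m) ℂ) - ∑ j, (A j)ᴴ * A j).PosSemidef := by
  have hsigned (s : Fin n → ℤˣ) :
      star (∑ j, (s j : ℤ) • A j) * ∑ j, (s j : ℤ) • A j ≤ 1 := by
    refine conjTranspose_mul_self_le_one_of_l2OpNorm_le_one ?_
    have hunit (j : Fin n) : ‖((s j : ℤ) : ℂ)‖ = 1 := by
      rcases Int.units_eq_one_or (s j) with h | h <;> simp [h]
    simpa [Int.cast_smul_eq_zsmul] using hA (fun j => ((s j : ℤ) : ℂ)) hunit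
  have hmean := Finset.sum_le_sum (s := .univ) fun s _ => hsigned s
  rw [sum_star_mul_self_sum_units_zsmul, Finset.sum_const, Finset.card_univ] at hmean
  refine PosSemidef.of_nsmul (Fintype.card_ne_zero (α := Fin n → ℤˣ)) ?_
  rw [smul_sub, ← le_iff]
  exact hmean

/-- If `‖z₁A₁ + ⋯ + z_nA_n‖ ≤ 1` for all `z` on the `n`-torus, then
`I − (A₁*A₁ + ⋯ + A_n*A_n)` is positive semidefinite. -/
theorem statement6
    (n m : ℕ) (hn : 0 < n) (hm : 0 < m) (A : Fin n → Matrix (Fin m) (Fin m) ℂ)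
    (hA : ∀ z : Fin n → ℂ, (∀ j, ‖z j‖ = 1) →
      l2OpNorm (∑ j, z j • A j) ≤ 1) :
    ((1 : Matrix (Fin m) (Fin m) ℂ) - ∑ j, (A j)ᴴ * A j).PosSemidef :=
  statement6_general n m A hA
end

section
/- Let v₁ = (1/√3)(0, −1, 1, 1, 0), v₂ = (1/√3)(0, 1, −1, 1, 0), v₃ = (1/√3)(0, 1, 1, −1, 0) ∈ ℂ⁵, and for j = 1, 2, 3 let T_j ∈ M₅(ℂ) be the matrix whose (j+1, 1) entry is 1, whose fifth row equals v_j, and whose all other entries are 0. Then for every positive integer m and all A₁, A₂, A₃ ∈ M_m(ℂ), setting B₁ = (1/√3)(−A₁ + A₂ + A₃), B₂ = (1/√3)(A₁ − A₂ + A₃), B₃ = (1/√3)(A₁ + A₂ − A₃), one has ‖A₁ ⊗ T₁ + A₂ ⊗ T₂ + A₃ ⊗ T₃‖² = max( ‖A₁*A₁ + A₂*A₂ + A₃*A₃‖, ‖B₁B₁* + B₂B₂* + B₃B₃*‖ ). -/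
open Matrix
open scoped Kronecker

/-!
Write `S = A₁ ⊗ T₁ + A₂ ⊗ T₂ + A₃ ⊗ T₃` as `X + Y`, with `X = ∑ Aⱼ ⊗ E_{j0}` its first block
column and `Y = ∑ Bᵢ ⊗ E_{4i}` its last block row: expanding the last rows `vⱼ` of the `Tⱼ` in
the standard basis is what turns the `Aⱼ` into the `Bᵢ`. Since `X*Y = 0` and `XY* = 0`, the
C*-identity reduces `‖X + Y‖ = max ‖X‖ ‖Y‖` to `‖P + Q‖ = max ‖P‖ ‖Q‖` for `P = X*X`,
`Q = Y*Y` with `PQ = 0`, which follows from `(P + Q)^(2^k) = P^(2^k) + Q^(2^k)`. Finally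
`‖X‖² = ‖X*X‖ = ‖∑ Aⱼ*Aⱼ‖` and `‖Y‖² = ‖YY*‖ = ‖∑ BᵢBᵢ*‖`.
-/

open Filter Topology

theorem le_of_forall_pow_two_pow_le_two_mul {x y : ℝ} (hy : 0 ≤ y)
    (h : ∀ n : ℕ, x ^ 2 ^ n ≤ 2 * y ^ 2 ^ n) : x ≤ y := by
  by_contra! hyx
  have hx : 0 < x := hy.trans_lt hyx
  have hlim : Tendsto (fun n : ℕ => (y / x) ^ 2 ^ n) atTop (𝓝 0) :=
    (tendsto_pow_atTop_nhds_zero_of_lt_one (by positivity) ((div_lt_one hx).2 hyx)).comp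
      (tendsto_pow_atTop_atTop_of_one_lt one_lt_two)
  have hbound : ∀ n : ℕ, 1 / 2 ≤ (y / x) ^ 2 ^ n := fun n => by
    rw [div_pow, le_div_iff₀ (by positivity)]
    linarith [h n]
  linarith [ge_of_tendsto' hlim hbound]

theorem add_pow_succ_of_mul_eq_zero {R : Type*} [Semiring R] {a b : R} (hab : a * b = 0)
    (hba : b * a = 0) (n : ℕ) : (a + b) ^ (n + 1) = a ^ (n + 1) + b ^ (n + 1) := by
  induction n with
  | zero => simp
  | succ n ih =>
    have ha : a ^ (n + 1) * b = 0 := by rw [pow_succ, mul_assoc, hab, mul_zero]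
    have hb : b ^ (n + 1) * a = 0 := by rw [pow_succ, mul_assoc, hba, mul_zero]
    rw [pow_succ, ih, add_mul, mul_add, mul_add, ha, hb, add_zero, zero_add, ← pow_succ,
      ← pow_succ]

section CStarRing

variable {E : Type*} [NormedRing E] [StarRing E] [CStarRing E]

theorem IsSelfAdjoint.norm_le_norm_add_of_mul_eq_zero {a b : E} (ha : IsSelfAdjoint a)
    (hab : a * b = 0) : ‖a‖ ≤ ‖a + b‖ := by
  have h : ‖a‖ * ‖a‖ ≤ ‖a‖ * ‖a + b‖ := calc
    ‖a‖ * ‖a‖ = ‖a * (a + b)‖ := by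
      rw [mul_add, hab, add_zero, ← CStarRing.norm_star_mul_self, ha.star_eq]
    _ ≤ ‖a‖ * ‖a + b‖ := norm_mul_le _ _
  rcases (norm_nonneg a).eq_or_lt with h₀ | h₀
  · exact h₀ ▸ norm_nonneg _
  · exact le_of_mul_le_mul_left h h₀

theorem IsSelfAdjoint.norm_add_eq_max_of_mul_eq_zero {a b : E} (ha : IsSelfAdjoint a)
    (hb : IsSelfAdjoint b) (hab : a * b = 0) : ‖a + b‖ = max ‖a‖ ‖b‖ := by
  have hba : b * a = 0 := by
    simpa [ha.star_eq, hb.star_eq] using congrArg star hab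
  refine le_antisymm (le_of_forall_pow_two_pow_le_two_mul ((norm_nonneg _).trans
    (le_max_left _ _)) fun n => ?_) (max_le (ha.norm_le_norm_add_of_mul_eq_zero hab)
    (add_comm a b ▸ hb.norm_le_norm_add_of_mul_eq_zero hba))
  obtain ⟨k, hk⟩ : ∃ k, 2 ^ n = k + 1 := Nat.exists_eq_add_one.2 (by positivity)
  calc ‖a + b‖ ^ 2 ^ n = ‖a ^ 2 ^ n + b ^ 2 ^ n‖ := by
        rw [← (ha.add hb).norm_pow_two_pow, hk, add_pow_succ_of_mul_eq_zero hab hba]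
    _ ≤ ‖a‖ ^ 2 ^ n + ‖b‖ ^ 2 ^ n := by
        rw [← ha.norm_pow_two_pow, ← hb.norm_pow_two_pow]
        exact norm_add_le _ _
    _ ≤ 2 * max ‖a‖ ‖b‖ ^ 2 ^ n := by
        rw [two_mul]
        gcongr
        exacts [le_max_left _ _, le_max_right _ _]

theorem CStarRing.norm_add_eq_max_of_orthogonal {a b : E} (h₁ : star a * b = 0)
    (h₂ : a * star b = 0) : ‖a + b‖ = max ‖a‖ ‖b‖ := by
  have h₃ : star b * a = 0 := by simpa using congrArg star h₁
  have hmul : star a * a * (star b * b) = 0 := by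
    rw [mul_assoc, ← mul_assoc a, h₂, zero_mul, mul_zero]
  have key := (IsSelfAdjoint.star_mul_self a).norm_add_eq_max_of_mul_eq_zero
    (IsSelfAdjoint.star_mul_self b) hmul
  rw [CStarRing.norm_star_mul_self, CStarRing.norm_star_mul_self, ← sq, ← sq,
    ← pow_left_monotoneOn.map_max (norm_nonneg a) (norm_nonneg b)] at key
  refine (pow_left_inj₀ (norm_nonneg _) ((norm_nonneg a).trans (le_max_left _ _))
    two_ne_zero).1 ?_
  rw [sq, ← CStarRing.norm_star_mul_self, star_add, add_mul, mul_add, mul_add, h₁, h₃, add_zero,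
    zero_add, key]

end CStarRing

open scoped Matrix.Norms.L2Operator

theorem l2OpNorm_eq_l2_opNorm {m n : Type} [Fintype m] [Fintype n] [DecidableEq n]
    (M : Matrix m n ℂ) : l2OpNorm M = ‖M‖ := rfl

namespace Matrix

variable {𝕜 : Type*} [RCLike 𝕜] {m n : Type*} [Fintype m] [Fintype n] [DecidableEq n]

theorem l2_opNorm_one_le : ‖(1 : Matrix n n 𝕜)‖ ≤ 1 := by
  rw [← diagonal_one, l2_opNorm_diagonal]
  exact (pi_norm_le_iff_of_nonneg zero_le_one).2 fun _ => by simp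

theorem l2_opNorm_le_one_of_conjTranspose_mul_self_eq_one {J : Matrix m n 𝕜}
    (hJ : Jᴴ * J = 1) : ‖J‖ ≤ 1 := by
  have h : ‖J‖ * ‖J‖ ≤ 1 * 1 := by
    rw [← l2_opNorm_conjTranspose_mul_self, hJ, one_mul]
    exact l2_opNorm_one_le
  exact (mul_self_le_mul_self_iff (norm_nonneg _) zero_le_one).2 h

theorem l2_opNorm_mul_mul_conjTranspose_of_isometry [DecidableEq m] {J : Matrix m n 𝕜}
    (hJ : Jᴴ * J = 1) (M : Matrix n n 𝕜) : ‖J * M * Jᴴ‖ = ‖M‖ := by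
  have hJ₁ := l2_opNorm_le_one_of_conjTranspose_mul_self_eq_one hJ
  have hJ₁' : ‖Jᴴ‖ ≤ 1 := (l2_opNorm_conjTranspose J).trans_le hJ₁
  refine le_antisymm ?_ ?_
  · calc ‖J * M * Jᴴ‖ ≤ ‖J‖ * ‖M‖ * ‖Jᴴ‖ :=
          (l2_opNorm_mul _ _).trans (by gcongr; exact l2_opNorm_mul _ _)
      _ ≤ 1 * ‖M‖ * 1 := by gcongr
      _ = ‖M‖ := by ring
  · calc ‖M‖ = ‖Jᴴ * (J * M * Jᴴ) * J‖ := by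
          rw [← Matrix.mul_assoc, ← Matrix.mul_assoc, hJ, Matrix.one_mul, Matrix.mul_assoc, hJ,
            Matrix.mul_one]
      _ ≤ ‖Jᴴ‖ * ‖J * M * Jᴴ‖ * ‖J‖ :=
          (l2_opNorm_mul _ _).trans (by gcongr; exact l2_opNorm_mul _ _)
      _ ≤ 1 * ‖J * M * Jᴴ‖ * 1 := by gcongr
      _ = ‖J * M * Jᴴ‖ := by ring

theorem l2_opNorm_kronecker_single_self (M : Matrix n n 𝕜) {κ : Type*} [Fintype κ]
    [DecidableEq κ] (k : κ) : ‖M ⊗ₖ single k k (1 : 𝕜)‖ = ‖M‖ := by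
  let J : Matrix (n × κ) n 𝕜 := (1 : Matrix (n × κ) (n × κ) 𝕜).submatrix id (·, k)
  have hJ : Jᴴ * J = 1 := by
    ext i j
    simp [J, mul_apply, one_apply]
  have hM : J * M * Jᴴ = M ⊗ₖ single k k 1 := by
    ext ⟨i, s⟩ ⟨j, t⟩
    rcases eq_or_ne k s with rfl | hs <;> rcases eq_or_ne k t with rfl | ht <;>
      simp [J, mul_apply, one_apply, *, Ne.symm]
  rw [← hM, l2_opNorm_mul_mul_conjTranspose_of_isometry hJ]

end Matrix

namespace KV

variable {n : Type*}

def firstColumn (A₁ A₂ A₃ : Matrix n n ℂ) : Matrix (n × Fin 5) (n × Fin 5) ℂ :=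
  A₁ ⊗ₖ single 1 0 1 + A₂ ⊗ₖ single 2 0 1 + A₃ ⊗ₖ single 3 0 1

def lastRow (B₁ B₂ B₃ : Matrix n n ℂ) : Matrix (n × Fin 5) (n × Fin 5) ℂ :=
  B₁ ⊗ₖ single 4 1 1 + B₂ ⊗ₖ single 4 2 1 + B₃ ⊗ₖ single 4 3 1

theorem kronecker_T_add_eq_firstColumn_add_lastRow {A₁ A₂ A₃ B₁ B₂ B₃ : Matrix n n ℂ}
    (hB₁ : B₁ = ((Real.sqrt 3 : ℂ))⁻¹ • (-A₁ + A₂ + A₃))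
    (hB₂ : B₂ = ((Real.sqrt 3 : ℂ))⁻¹ • (A₁ - A₂ + A₃))
    (hB₃ : B₃ = ((Real.sqrt 3 : ℂ))⁻¹ • (A₁ + A₂ - A₃)) :
    A₁ ⊗ₖ T₁ + A₂ ⊗ₖ T₂ + A₃ ⊗ₖ T₃ = firstColumn A₁ A₂ A₃ + lastRow B₁ B₂ B₃ := by
  subst hB₁ hB₂ hB₃
  ext ⟨i, s⟩ ⟨j, t⟩
  fin_cases s <;> fin_cases t <;> simp [firstColumn, lastRow, T₁, T₂, T₃, c] <;> ring

variable [Fintype n]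

theorem conjTranspose_firstColumn_mul_lastRow (A₁ A₂ A₃ B₁ B₂ B₃ : Matrix n n ℂ) :
    (firstColumn A₁ A₂ A₃)ᴴ * lastRow B₁ B₂ B₃ = 0 := by
  simp [firstColumn, lastRow, Matrix.add_mul, Matrix.mul_add, conjTranspose_kronecker,
    ← mul_kronecker_mul, single_mul_single_of_ne]

theorem firstColumn_mul_conjTranspose_lastRow (A₁ A₂ A₃ B₁ B₂ B₃ : Matrix n n ℂ) :
    firstColumn A₁ A₂ A₃ * (lastRow B₁ B₂ B₃)ᴴ = 0 := by
  simp [firstColumn, lastRow, Matrix.add_mul, Matrix.mul_add, conjTranspose_kronecker,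
    ← mul_kronecker_mul, single_mul_single_of_ne]

theorem conjTranspose_firstColumn_mul_self (A₁ A₂ A₃ : Matrix n n ℂ) :
    (firstColumn A₁ A₂ A₃)ᴴ * firstColumn A₁ A₂ A₃ =
      (A₁ᴴ * A₁ + A₂ᴴ * A₂ + A₃ᴴ * A₃) ⊗ₖ single 0 0 1 := by
  simp [firstColumn, Matrix.add_mul, Matrix.mul_add, conjTranspose_kronecker,
    ← mul_kronecker_mul, single_mul_single_of_ne, add_kronecker]

theorem lastRow_mul_conjTranspose_self (B₁ B₂ B₃ : Matrix n n ℂ) :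
    lastRow B₁ B₂ B₃ * (lastRow B₁ B₂ B₃)ᴴ =
      (B₁ * B₁ᴴ + B₂ * B₂ᴴ + B₃ * B₃ᴴ) ⊗ₖ single 4 4 1 := by
  simp [lastRow, Matrix.add_mul, Matrix.mul_add, conjTranspose_kronecker,
    ← mul_kronecker_mul, single_mul_single_of_ne, add_kronecker]

end KV

theorem statement7_general
    (m : ℕ) (A₁ A₂ A₃ B₁ B₂ B₃ : Matrix (Fin m) (Fin m) ℂ)
    (hB₁ : B₁ = ((Real.sqrt 3 : ℂ))⁻¹ • (-A₁ + A₂ + A₃))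
    (hB₂ : B₂ = ((Real.sqrt 3 : ℂ))⁻¹ • (A₁ - A₂ + A₃))
    (hB₃ : B₃ = ((Real.sqrt 3 : ℂ))⁻¹ • (A₁ + A₂ - A₃)) :
    l2OpNorm (A₁ ⊗ₖ KV.T₁ + A₂ ⊗ₖ KV.T₂ + A₃ ⊗ₖ KV.T₃) ^ 2 =
      max (l2OpNorm (A₁ᴴ * A₁ + A₂ᴴ * A₂ + A₃ᴴ * A₃))
        (l2OpNorm (B₁ * B₁ᴴ + B₂ * B₂ᴴ + B₃ * B₃ᴴ)) := by
  simp only [l2OpNorm_eq_l2_opNorm]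
  rw [KV.kronecker_T_add_eq_firstColumn_add_lastRow hB₁ hB₂ hB₃,
    CStarRing.norm_add_eq_max_of_orthogonal (KV.conjTranspose_firstColumn_mul_lastRow ..)
      (KV.firstColumn_mul_conjTranspose_lastRow ..),
    pow_left_monotoneOn.map_max (norm_nonneg _) (norm_nonneg _), sq, sq,
    ← CStarRing.norm_star_mul_self, ← CStarRing.norm_self_mul_star, star_eq_conjTranspose,
    star_eq_conjTranspose, KV.conjTranspose_firstColumn_mul_self,
    KV.lastRow_mul_conjTranspose_self, Matrix.l2_opNorm_kronecker_single_self,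
    Matrix.l2_opNorm_kronecker_single_self]

/-- For the Kaijser–Varopoulos matrices,
`‖A₁ ⊗ T₁ + A₂ ⊗ T₂ + A₃ ⊗ T₃‖²` equals the maximum of the norm of the first block
column and of the last block row. -/
theorem statement7
    (m : ℕ) (hm : 0 < m) (A₁ A₂ A₃ B₁ B₂ B₃ : Matrix (Fin m) (Fin m) ℂ)
    (hB₁ : B₁ = ((Real.sqrt 3 : ℂ))⁻¹ • (-A₁ + A₂ + A₃))
    (hB₂ : B₂ = ((Real.sqrt 3 : ℂ))⁻¹ • (A₁ - A₂ + A₃))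
    (hB₃ : B₃ = ((Real.sqrt 3 : ℂ))⁻¹ • (A₁ + A₂ - A₃)) :
    l2OpNorm (A₁ ⊗ₖ KV.T₁ + A₂ ⊗ₖ KV.T₂ + A₃ ⊗ₖ KV.T₃) ^ 2 =
      max (l2OpNorm (A₁ᴴ * A₁ + A₂ᴴ * A₂ + A₃ᴴ * A₃))
        (l2OpNorm (B₁ * B₁ᴴ + B₂ * B₂ᴴ + B₃ * B₃ᴴ)) :=
  statement7_general m A₁ A₂ A₃ B₁ B₂ B₃ hB₁ hB₂ hB₃
end

section
/- Let n, N be positive integers, K′ a complex Hilbert space, U a unitary operator on K′ ⊕ ℂ^N with block decomposition U = [[A, B], [C, D]] (A : K′ → K′, B : ℂ^N → K′, C : K′ → ℂ^N, D : ℂ^N → ℂ^N), and let S₁, …, S_n ∈ B(K′). Define σ(z) := z₁S₁ + ⋯ + z_nS_n for z ∈ ℂⁿ and Ω := { z ∈ ℂⁿ : ‖σ(z)‖ < 1 }. Then Ω is open, for each z ∈ Ω the operator I_{K′} − σ(z)A is invertible, and the function f(z) := D + C (I_{K′} − σ(z) A)^{-1} σ(z) B, taking values in B(ℂ^N), is analytic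 (holomorphic) on Ω and satisfies ‖f(z)‖ ≤ 1 for every z ∈ Ω. -/
open ContinuousLinearMap

/-!
Unitarity of `U` gives `‖A k + B x‖² + ‖C k + D x‖² = ‖k‖² + ‖x‖²`; in particular `‖A‖ ≤ 1`, so
`‖σ(z) A‖ < 1` on `Ω` and `I − σ(z)A` is invertible by the Neumann series. For fixed `x`, the vector
`k = (I − σ(z)A)⁻¹ σ(z) B x` solves the feedback equation `k = σ(z)(A k + B x)`, and
`f(z) x = C k + D x`. Since `σ(z)` is a contraction, `‖k‖ ≤ ‖A k + B x‖`, and the energy balance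
above forces `‖C k + D x‖ ≤ ‖x‖`. Analyticity holds because `σ` is linear and inversion is analytic
on the units of the Banach algebra `B(K′)`.
-/

lemma le_of_sq_add_sq_eq_sq_add_sq {a b c d : ℝ} (h : a ^ 2 + b ^ 2 = c ^ 2 + d ^ 2)
    (hca : c ≤ a) (hc : 0 ≤ c) (hd : 0 ≤ d) : b ≤ d := by
  nlinarith

theorem AnalyticAt.clm_comp {𝕜 X E F G : Type*} [NontriviallyNormedField 𝕜]
    [NormedAddCommGroup X] [NormedSpace 𝕜 X] [NormedAddCommGroup E] [NormedSpace 𝕜 E]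
    [NormedAddCommGroup F] [NormedSpace 𝕜 F] [NormedAddCommGroup G] [NormedSpace 𝕜 G]
    {f : X → F →L[𝕜] G} {g : X → E →L[𝕜] F} {z : X}
    (hf : AnalyticAt 𝕜 f z) (hg : AnalyticAt 𝕜 g z) :
    AnalyticAt 𝕜 (fun z => f z ∘L g z) z :=
  ((compL 𝕜 E F G).analyticAt_bilinear _).comp (hf.prod hg)

section Colligation

variable {𝕜 E F : Type*} [NontriviallyNormedField 𝕜]
  [NormedAddCommGroup E] [NormedSpace 𝕜 E] [NormedAddCommGroup F] [NormedSpace 𝕜 F]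

/-- `Ring.inverse` takes the junk value `0` when `1 - T A` is not invertible. -/
noncomputable def transferFunction (A : E →L[𝕜] E) (B : F →L[𝕜] E) (C : E →L[𝕜] F)
    (D : F →L[𝕜] F) (T : E →L[𝕜] E) : F →L[𝕜] F :=
  D + C ∘L Ring.inverse (1 - T ∘L A) ∘L T ∘L B

variable {A : E →L[𝕜] E} {B : F →L[𝕜] E} {C : E →L[𝕜] F} {D : F →L[𝕜] F}

theorem norm_sq_add_norm_sq_of_isometry_blocks (U : WithLp 2 (E × F) →ₗᵢ[𝕜] WithLp 2 (E × F))
    (hU : ∀ k x, U ((WithLp.equiv 2 (E × F)).symm (k, x)) =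
      (WithLp.equiv 2 (E × F)).symm (A k + B x, C k + D x)) (k : E) (x : F) :
    ‖A k + B x‖ ^ 2 + ‖C k + D x‖ ^ 2 = ‖k‖ ^ 2 + ‖x‖ ^ 2 := by
  calc ‖A k + B x‖ ^ 2 + ‖C k + D x‖ ^ 2
      = ‖(WithLp.equiv 2 (E × F)).symm (A k + B x, C k + D x)‖ ^ 2 :=
        by rw [WithLp.prod_norm_sq_eq_of_L2]; rfl
    _ = ‖(WithLp.equiv 2 (E × F)).symm (k, x)‖ ^ 2 := by rw [← hU, U.norm_map]
    _ = ‖k‖ ^ 2 + ‖x‖ ^ 2 := by rw [WithLp.prod_norm_sq_eq_of_L2]; rfl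

theorem opNorm_le_one_of_norm_sq_add_norm_sq
    (hiso : ∀ k x, ‖A k + B x‖ ^ 2 + ‖C k + D x‖ ^ 2 = ‖k‖ ^ 2 + ‖x‖ ^ 2) : ‖A‖ ≤ 1 := by
  refine opNorm_le_bound _ zero_le_one fun k => ?_
  have h := hiso k 0
  simp only [map_zero, add_zero, norm_zero] at h
  rw [one_mul]
  exact le_of_sq_add_sq_eq_sq_add_sq (a := ‖C k‖) (c := 0) (by linarith) (norm_nonneg _) le_rfl
    (norm_nonneg k)

theorem norm_output_le_of_feedback
    (hiso : ∀ k x, ‖A k + B x‖ ^ 2 + ‖C k + D x‖ ^ 2 = ‖k‖ ^ 2 + ‖x‖ ^ 2)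
    {T : E →L[𝕜] E} (hT : ‖T‖ ≤ 1) {k : E} {x : F} (hk : k = T (A k + B x)) :
    ‖C k + D x‖ ≤ ‖x‖ := by
  have hk_le : ‖k‖ ≤ ‖A k + B x‖ := by
    simpa only [one_mul, ← hk] using T.le_of_opNorm_le hT (A k + B x)
  exact le_of_sq_add_sq_eq_sq_add_sq (hiso k x) hk_le (norm_nonneg _) (norm_nonneg _)

theorem isUnit_one_sub_comp_of_norm_lt_one [CompleteSpace E] {T : E →L[𝕜] E} (hT : ‖T‖ < 1)
    (hA : ‖A‖ ≤ 1) : IsUnit (1 - T ∘L A) :=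
  isUnit_one_sub_of_norm_lt_one <| (opNorm_comp_le T A).trans_lt <| by
    nlinarith [norm_nonneg T, norm_nonneg A]

theorem exists_feedback_of_isUnit {T : E →L[𝕜] E} (hu : IsUnit (1 - T ∘L A)) (x : F) :
    ∃ k, k = T (A k + B x) ∧ transferFunction A B C D T x = C k + D x := by
  set k := Ring.inverse (1 - T ∘L A) (T (B x))
  have hk : k - T (A k) = T (B x) := by
    have h := congrArg (· (T (B x))) (Ring.mul_inverse_cancel _ hu)
    simpa only [mul_apply_eq_comp, _root_.sub_apply, one_apply_eq_self, comp_apply] using h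
  refine ⟨k, ?_, add_comm _ _⟩
  rw [map_add]
  linear_combination (norm := module) hk

theorem norm_transferFunction_le_one
    (hiso : ∀ k x, ‖A k + B x‖ ^ 2 + ‖C k + D x‖ ^ 2 = ‖k‖ ^ 2 + ‖x‖ ^ 2)
    {T : E →L[𝕜] E} (hT : ‖T‖ ≤ 1) (hu : IsUnit (1 - T ∘L A)) :
    ‖transferFunction A B C D T‖ ≤ 1 := by
  refine opNorm_le_bound _ zero_le_one fun x => ?_
  obtain ⟨k, hk, hfx⟩ := exists_feedback_of_isUnit (C := C) (D := D) hu x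
  rw [hfx, one_mul]
  exact norm_output_le_of_feedback hiso hT hk

theorem AnalyticAt.transferFunction [CompleteSpace E] {X : Type*} [NormedAddCommGroup X]
    [NormedSpace 𝕜 X]
    {σ : X → E →L[𝕜] E} {z : X} (hσ : AnalyticAt 𝕜 σ z) (hu : IsUnit (1 - σ z ∘L A)) :
    AnalyticAt 𝕜 (fun z => transferFunction A B C D (σ z)) z := by
  have hinv : AnalyticAt 𝕜 (fun z => Ring.inverse (1 - σ z ∘L A)) z :=
    (analyticOnNhd_inverse _ hu).comp (f := fun z => 1 - σ z ∘L A)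
      (analyticAt_const.sub (hσ.clm_comp analyticAt_const))
  exact analyticAt_const.add (analyticAt_const.clm_comp (hinv.clm_comp
    (hσ.clm_comp analyticAt_const)))

end Colligation

theorem statement11_general
    {n N : ℕ}
    {K' : Type} [NormedAddCommGroup K'] [InnerProductSpace ℂ K'] [CompleteSpace K']
    (U : WithLp 2 (K' × EuclideanSpace ℂ (Fin N)) ≃ₗᵢ[ℂ]
      WithLp 2 (K' × EuclideanSpace ℂ (Fin N)))
    (A : K' →L[ℂ] K') (B : EuclideanSpace ℂ (Fin N) →L[ℂ] K')
    (C : K' →L[ℂ] EuclideanSpace ℂ (Fin N))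
    (D : EuclideanSpace ℂ (Fin N) →L[ℂ] EuclideanSpace ℂ (Fin N))
    (hU : ∀ (k : K') (x : EuclideanSpace ℂ (Fin N)),
      U ((WithLp.equiv 2 (K' × EuclideanSpace ℂ (Fin N))).symm (k, x)) =
        (WithLp.equiv 2 (K' × EuclideanSpace ℂ (Fin N))).symm (A k + B x, C k + D x))
    (S : Fin n → K' →L[ℂ] K')
    (Ω : Set (EuclideanSpace ℂ (Fin n)))
    (hΩ : Ω = {z : EuclideanSpace ℂ (Fin n) | ‖∑ j, z j • S j‖ < 1})
    (f : EuclideanSpace ℂ (Fin n) →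
      EuclideanSpace ℂ (Fin N) →L[ℂ] EuclideanSpace ℂ (Fin N))
    (hf : ∀ z, f z = D + C ∘L Ring.inverse (1 - (∑ j, z j • S j) ∘L A) ∘L
      (∑ j, z j • S j) ∘L B) :
    IsOpen Ω ∧
    (∀ z ∈ Ω, IsUnit (1 - (∑ j, z j • S j) ∘L A)) ∧
    AnalyticOnNhd ℂ f Ω ∧
    ∀ z ∈ Ω, ‖f z‖ ≤ 1 := by
  subst hΩ
  have hiso := norm_sq_add_norm_sq_of_isometry_blocks U.toLinearIsometry hU
  have hA := opNorm_le_one_of_norm_sq_add_norm_sq hiso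
  have hunit (z : EuclideanSpace ℂ (Fin n)) (hz : ‖∑ j, z j • S j‖ < 1) :
      IsUnit (1 - (∑ j, z j • S j) ∘L A) :=
    isUnit_one_sub_comp_of_norm_lt_one hz hA
  have hσ (z : EuclideanSpace ℂ (Fin n)) :
      AnalyticAt ℂ (fun z : EuclideanSpace ℂ (Fin n) => ∑ j, z j • S j) z :=
    Finset.analyticAt_fun_sum _ fun j _ =>
      ((EuclideanSpace.proj j : EuclideanSpace ℂ (Fin n) →L[ℂ] ℂ).analyticAt z).smul
        analyticAt_const
  obtain rfl : f = fun z => transferFunction A B C D (∑ j, z j • S j) := funext hf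
  refine ⟨isOpen_lt (by fun_prop) continuous_const, hunit,
    fun z hz => (hσ z).transferFunction (hunit z hz), fun z hz => ?_⟩
  exact norm_transferFunction_le_one hiso hz.le (hunit z hz)

/-- If `U = [[A, B], [C, D]]` is a unitary on `K' ⊕ ℂ^N` and
`σ(z) = z₁S₁ + ⋯ + z_nS_n`, then on `Ω = {z : ‖σ(z)‖ < 1}` (which is open) the operator
`I − σ(z)A` is invertible, and the transfer function
`f(z) = D + C(I − σ(z)A)⁻¹σ(z)B` is analytic on `Ω` with `‖f(z)‖ ≤ 1` there. -/
theorem statement11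
    {n N : ℕ} (hn : 0 < n) (hN : 0 < N)
    {K' : Type} [NormedAddCommGroup K'] [InnerProductSpace ℂ K'] [CompleteSpace K']
    (U : WithLp 2 (K' × EuclideanSpace ℂ (Fin N)) ≃ₗᵢ[ℂ]
      WithLp 2 (K' × EuclideanSpace ℂ (Fin N)))
    (A : K' →L[ℂ] K') (B : EuclideanSpace ℂ (Fin N) →L[ℂ] K')
    (C : K' →L[ℂ] EuclideanSpace ℂ (Fin N))
    (D : EuclideanSpace ℂ (Fin N) →L[ℂ] EuclideanSpace ℂ (Fin N))
    (hU : ∀ (k : K') (x : EuclideanSpace ℂ (Fin N)),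
      U ((WithLp.equiv 2 (K' × EuclideanSpace ℂ (Fin N))).symm (k, x)) =
        (WithLp.equiv 2 (K' × EuclideanSpace ℂ (Fin N))).symm (A k + B x, C k + D x))
    (S : Fin n → K' →L[ℂ] K')
    (Ω : Set (EuclideanSpace ℂ (Fin n)))
    (hΩ : Ω = {z : EuclideanSpace ℂ (Fin n) | ‖∑ j, z j • S j‖ < 1})
    (f : EuclideanSpace ℂ (Fin n) →
      EuclideanSpace ℂ (Fin N) →L[ℂ] EuclideanSpace ℂ (Fin N))
    (hf : ∀ z, f z = D + C ∘L Ring.inverse (1 - (∑ j, z j • S j) ∘L A) ∘L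
      (∑ j, z j • S j) ∘L B) :
    IsOpen Ω ∧
    (∀ z ∈ Ω, IsUnit (1 - (∑ j, z j • S j) ∘L A)) ∧
    AnalyticOnNhd ℂ f Ω ∧
    ∀ z ∈ Ω, ‖f z‖ ≤ 1 :=
  statement11_general U A B C D hU S Ω hΩ f hf
end

section
/- Let n, d, m be positive integers, let T₁, …, T_n ∈ M_d(ℂ), define σ(z) := z₁T₁ + ⋯ + z_nT_n for z ∈ ℂⁿ, and set Ω := { z ∈ ℂⁿ : ‖σ(z)‖ < 1 }. Suppose λ₁, …, λ_m ∈ Ω, w₁, …, w_m ∈ ℂ, and there exist row vectors v₁, …, v_m ∈ ℂ^d such that 1 − w_i \overline{w_j} = v_i (I_d − σ(λ_i) σ(λ_j)*) v_j* for all i, j = 1, …, m. Then there exists an analytic function f : Ω → ℂ with |f(z)| ≤ 1 for all z ∈ Ω and f(λ_j) = w_j for every j = 1, …, m. -/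
/-!
Lurking isometry argument. Read as a Gram identity, the hypothesis says that the vectors
`(1, σ(λᵢ)ᵀ vᵢᵀ)` and `(wᵢ, vᵢᵀ)` of `ℂ ⊕ ℂᵈ` have the same Gram matrix, so some isometry `U` of
`ℂ ⊕ ℂᵈ` maps the first family to the second. Writing `U = [[a, B], [c, D]]` in block form, the
transfer function `f(S) = a + B S (1 - D S)⁻¹ c` is analytic and bounded by `1` on the unit ball of
operators `S` on `ℂᵈ`, and `f(σ(λᵢ)ᵀ) = wᵢ`. Since `z ↦ σ(z)ᵀ` is linear and `‖σ(z)ᵀ‖ ≤ ‖σ(z)‖`,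
`z ↦ f(σ(z)ᵀ)` is the required interpolant.
-/

open Matrix

open WithLp

theorem LinearIsometry.exists_apply_eq_of_inner_eq {𝕜 V ι : Type*} [RCLike 𝕜]
    [NormedAddCommGroup V] [InnerProductSpace 𝕜 V] [FiniteDimensional 𝕜 V] [Fintype ι]
    (b a : ι → V) (h : ∀ i j, inner 𝕜 (b i) (b j) = inner 𝕜 (a i) (a j)) :
    ∃ L : V →ₗᵢ[𝕜] V, ∀ i, L (b i) = a i := by
  classical
  set P := Fintype.linearCombination 𝕜 b
  set Q := Fintype.linearCombination 𝕜 a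
  have hPQ : ∀ t u, inner 𝕜 (Q t) (Q u) = inner 𝕜 (P t) (P u) := by
    intro t u
    simp only [P, Q, Fintype.linearCombination_apply, sum_inner, inner_sum, inner_smul_left,
      inner_smul_right, h]
  have hker : LinearMap.ker P ≤ LinearMap.ker Q := fun t ht => by
    rw [LinearMap.mem_ker, ← inner_self_eq_zero (𝕜 := 𝕜), hPQ, LinearMap.mem_ker.mp ht,
      inner_zero_left]
  let L₀ : LinearMap.range P →ₗ[𝕜] V :=
    (LinearMap.ker P).liftQ Q hker ∘ₗ P.quotKerEquivRange.symm.toLinearMap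
  have hL₀ : ∀ t, L₀ ⟨P t, LinearMap.mem_range_self P t⟩ = Q t := fun t => by
    simp [L₀, LinearMap.quotKerEquivRange_symm_apply_image]
  let L : LinearMap.range P →ₗᵢ[𝕜] V := L₀.isometryOfInner <| by
    rintro ⟨_, t, rfl⟩ ⟨_, u, rfl⟩
    rw [hL₀, hL₀, hPQ]
    rfl
  refine ⟨L.extend, fun i => ?_⟩
  have hb : P (Pi.single i 1) = b i := by simp [P]
  have ha : Q (Pi.single i 1) = a i := by simp [Q]
  rw [← hb, ← ha, ← hL₀]
  exact L.extend_apply ⟨P (Pi.single i 1), LinearMap.mem_range_self P _⟩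

namespace LinearIsometry

variable {𝕜 H : Type*} [RCLike 𝕜] [NormedAddCommGroup H] [NormedSpace 𝕜 H]
  (U : WithLp 2 (𝕜 × H) →ₗᵢ[𝕜] WithLp 2 (𝕜 × H))

-- In the block form `U = [[a, B], [c, D]]` on `𝕜 ⊕ H`, these are `D` and `B`.
noncomputable def stateBlock : H →L[𝕜] H :=
  sndL 2 𝕜 𝕜 H ∘L U.toContinuousLinearMap ∘L
    (prodContinuousLinearEquiv 2 𝕜 𝕜 H).symm.toContinuousLinearMap ∘L ContinuousLinearMap.inr 𝕜 𝕜 H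

noncomputable def outputBlock : H →L[𝕜] 𝕜 :=
  fstL 2 𝕜 𝕜 H ∘L U.toContinuousLinearMap ∘L
    (prodContinuousLinearEquiv 2 𝕜 𝕜 H).symm.toContinuousLinearMap ∘L ContinuousLinearMap.inr 𝕜 𝕜 H

noncomputable def transferState (S : H →L[𝕜] H) : H :=
  Ring.inverse (1 - U.stateBlock * S) (U (toLp 2 (1, 0))).snd

noncomputable def transferFunction (S : H →L[𝕜] H) : 𝕜 :=
  (U (toLp 2 (1, S (U.transferState S)))).fst

theorem apply_toLp_one (y : H) :
    U (toLp 2 (1, y)) = U (toLp 2 (1, 0)) + U (toLp 2 (0, y)) := by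
  rw [← map_add, ← toLp_add, Prod.mk_add_mk, add_zero, zero_add]

theorem fst_apply_toLp_one (y : H) :
    (U (toLp 2 (1, y))).fst = (U (toLp 2 (1, 0))).fst + U.outputBlock y := by
  rw [apply_toLp_one]; rfl

theorem snd_apply_toLp_one (y : H) :
    (U (toLp 2 (1, y))).snd = (U (toLp 2 (1, 0))).snd + U.stateBlock y := by
  rw [apply_toLp_one]; rfl

theorem norm_stateBlock_le : ‖U.stateBlock‖ ≤ 1 :=
  ContinuousLinearMap.opNorm_le_bound _ zero_le_one fun y => by
    calc ‖U.stateBlock y‖ ≤ ‖U (toLp 2 (0, y))‖ := WithLp.norm_snd_le 𝕜 _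
      _ = ‖y‖ := by rw [U.norm_map, norm_toLp_snd]
      _ = 1 * ‖y‖ := (one_mul _).symm

theorem isUnit_one_sub_stateBlock_mul [CompleteSpace H] {S : H →L[𝕜] H} (hS : ‖S‖ < 1) :
    IsUnit (1 - U.stateBlock * S) :=
  (Units.oneSub _ <| (norm_mul_le _ _).trans_lt <|
    (mul_le_of_le_one_left (norm_nonneg _) U.norm_stateBlock_le).trans_lt hS).isUnit

theorem transferState_eq_iff {S : H →L[𝕜] H} (hS : IsUnit (1 - U.stateBlock * S)) {y : H} :
    U.transferState S = y ↔ (U (toLp 2 (1, S y))).snd = y := by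
  obtain ⟨u, hu⟩ := hS
  rw [snd_apply_toLp_one, transferState, ← hu, Ring.inverse_unit]
  have hinv : ∀ c : H, (↑u⁻¹ : H →L[𝕜] H) c = y ↔ c = (u : H →L[𝕜] H) y := fun c => by
    constructor
    · rintro rfl
      rw [← mul_apply_eq_comp, Units.mul_inv, one_apply_eq_self]
    · rintro rfl
      rw [← mul_apply_eq_comp, Units.inv_mul, one_apply_eq_self]
  rw [hinv, hu, _root_.sub_apply, one_apply_eq_self, mul_apply_eq_comp, eq_sub_iff_add_eq]

theorem apply_transferState {S : H →L[𝕜] H} (hS : IsUnit (1 - U.stateBlock * S)) :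
    U (toLp 2 (1, S (U.transferState S))) = toLp 2 (U.transferFunction S, U.transferState S) :=
  WithLp.ofLp_injective 2 <| Prod.ext rfl ((U.transferState_eq_iff hS).1 rfl)

theorem transferFunction_eq_of_apply_eq {S : H →L[𝕜] H} (hS : IsUnit (1 - U.stateBlock * S))
    {w : 𝕜} {y : H} (h : U (toLp 2 (1, S y)) = toLp 2 (w, y)) : U.transferFunction S = w := by
  have hy : U.transferState S = y := (U.transferState_eq_iff hS).2 (by rw [h]; rfl)
  rw [transferFunction, hy, h]; rfl

theorem norm_transferFunction_le_one [CompleteSpace H] {S : H →L[𝕜] H} (hS : ‖S‖ < 1) :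
    ‖U.transferFunction S‖ ≤ 1 := by
  set x := U.transferState S
  have hU := congrArg (‖·‖ ^ 2) (U.apply_transferState (U.isUnit_one_sub_stateBlock_mul hS))
  simp only [U.norm_map, prod_norm_sq_eq_of_L2, toLp_fst, toLp_snd, norm_one] at hU
  have hSx : ‖S x‖ ≤ ‖x‖ := S.le_of_opNorm_le hS.le x |>.trans_eq (one_mul _)
  have : ‖U.transferFunction S‖ ^ 2 ≤ 1 := by nlinarith [norm_nonneg (S x)]
  exact (sq_le_one_iff₀ (norm_nonneg _)).1 this

theorem transferFunction_eq (S : H →L[𝕜] H) :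
    U.transferFunction S = (U (toLp 2 (1, 0))).fst +
      U.outputBlock ((S * Ring.inverse (1 - U.stateBlock * S)) (U (toLp 2 (1, 0))).snd) :=
  U.fst_apply_toLp_one _

theorem analyticOnNhd_transferFunction [CompleteSpace H] :
    AnalyticOnNhd 𝕜 U.transferFunction (Metric.ball 0 1) := by
  intro S hS
  set c := (U (toLp 2 (1, 0))).snd
  have hsub : AnalyticAt 𝕜 (fun S => 1 - U.stateBlock * S) S :=
    analyticAt_const.sub (analyticAt_const.mul analyticAt_id)
  have hinv : AnalyticAt 𝕜 Ring.inverse (1 - U.stateBlock * S) :=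
    analyticOnNhd_inverse _ (U.isUnit_one_sub_stateBlock_mul (mem_ball_zero_iff.1 hS))
  have hstate : AnalyticAt 𝕜 (fun S => S * Ring.inverse (1 - U.stateBlock * S)) S :=
    analyticAt_id.mul (AnalyticAt.fun_comp (f := fun S => 1 - U.stateBlock * S) hinv hsub)
  have hout : AnalyticAt 𝕜
      (fun S => U.outputBlock ((S * Ring.inverse (1 - U.stateBlock * S)) c)) S :=
    ((U.outputBlock ∘L ContinuousLinearMap.apply 𝕜 H c).analyticAt _).comp hstate
  rw [funext U.transferFunction_eq]
  exact analyticAt_const.add hout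

end LinearIsometry

theorem norm_toLp_star {ι : Type*} [Fintype ι] (x : ι → ℂ) :
    ‖toLp 2 (star x)‖ = ‖toLp 2 x‖ := by
  simp [EuclideanSpace.norm_eq]

theorem norm_toEuclideanCLM_transpose_le {ι : Type*} [Fintype ι] [DecidableEq ι]
    (M : Matrix ι ι ℂ) :
    ‖toEuclideanCLM (𝕜 := ℂ) Mᵀ‖ ≤ ‖toEuclideanCLM (𝕜 := ℂ) M‖ := by
  refine ContinuousLinearMap.opNorm_le_bound _ (norm_nonneg _) fun x => ?_
  have hconj : Mᵀ *ᵥ x.ofLp = star (Mᴴ *ᵥ star x.ofLp) := by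
    rw [star_mulVec, star_star, conjTranspose_conjTranspose, mulVec_transpose]
  calc ‖toEuclideanCLM (𝕜 := ℂ) Mᵀ x‖
      = ‖toEuclideanCLM (𝕜 := ℂ) Mᴴ (toLp 2 (star x.ofLp))‖ := by
        rw [← toLp_ofLp (p := 2) (toEuclideanCLM (𝕜 := ℂ) Mᵀ x), ofLp_toEuclideanCLM, hconj,
          norm_toLp_star, toEuclideanCLM_toLp]
    _ ≤ ‖toEuclideanCLM (𝕜 := ℂ) M‖ * ‖x‖ := by
        refine (ContinuousLinearMap.le_opNorm _ _).trans_eq ?_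
        rw [norm_toLp_star, toLp_ofLp, ← star_eq_conjTranspose, map_star,
          ContinuousLinearMap.star_eq_adjoint, LinearIsometryEquiv.norm_map]

theorem inner_toLp_row {ι κ : Type*} [Fintype κ] (r s : Matrix ι κ ℂ) (i : ι) :
    inner ℂ (toLp 2 (r i)) (toLp 2 (s i)) = (s * rᴴ) i i := by
  simp [PiLp.inner_apply, mul_apply]

theorem toEuclideanCLM_transpose_toLp_row {ι κ : Type*} [Fintype κ] [DecidableEq κ]
    (M : Matrix κ κ ℂ) (r : Matrix ι κ ℂ) (i : ι) :
    toEuclideanCLM (𝕜 := ℂ) Mᵀ (toLp 2 (r i)) = toLp 2 ((r * M) i) := by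
  rw [toEuclideanCLM_toLp, mulVec_transpose]
  rfl

noncomputable def transposePencil {ι κ : Type*} [Fintype ι] [Fintype κ] [DecidableEq κ]
    (T : ι → Matrix κ κ ℂ) :
    EuclideanSpace ℂ ι →L[ℂ] (EuclideanSpace ℂ κ →L[ℂ] EuclideanSpace ℂ κ) :=
  ∑ k, (EuclideanSpace.proj k).smulRight (toEuclideanCLM (𝕜 := ℂ) (T k)ᵀ)

theorem transposePencil_apply {ι κ : Type*} [Fintype ι] [Fintype κ] [DecidableEq κ]
    (T : ι → Matrix κ κ ℂ) (z : EuclideanSpace ℂ ι) :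
    transposePencil T z = toEuclideanCLM (𝕜 := ℂ) (∑ k, z k • T k)ᵀ := by
  simp [transposePencil, transpose_sum, transpose_smul]

theorem inner_eq_of_pick_decomposition {ι κ : Type*} [Fintype κ] [DecidableEq κ]
    {A : ι → Matrix κ κ ℂ} {w : ι → ℂ} {v : ι → Matrix (Fin 1) κ ℂ}
    (h : ∀ i j, !![1 - w i * starRingEnd ℂ (w j)] = v i * (1 - A i * (A j)ᴴ) * (v j)ᴴ)
    (i j : ι) :
    inner ℂ (toLp 2 ((1 : ℂ), toEuclideanCLM (𝕜 := ℂ) (A i)ᵀ (toLp 2 (v i 0))))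
        (toLp 2 (1, toEuclideanCLM (𝕜 := ℂ) (A j)ᵀ (toLp 2 (v j 0)))) =
      inner ℂ (toLp 2 (w i, toLp 2 (v i 0))) (toLp 2 (w j, toLp 2 (v j 0))) := by
  have hji := congrFun₂ (h j i) 0 0
  rw [Matrix.mul_sub, Matrix.sub_mul, Matrix.mul_one, ← Matrix.mul_assoc (v j),
    Matrix.mul_assoc (v j * A j), ← conjTranspose_mul] at hji
  simp only [prod_inner_apply, toEuclideanCLM_transpose_toLp_row, inner_toLp_row]
  simp only [Fin.isValue, of_apply, cons_val', cons_val_fin_one, Matrix.sub_apply,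
    inner_self_eq_norm_sq_to_K, norm_one, Complex.coe_algebraMap, Complex.ofReal_one, one_pow,
    RCLike.inner_apply] at hji ⊢
  linear_combination hji

theorem statement12_general
    {n d m : ℕ}
    (T : Fin n → Matrix (Fin d) (Fin d) ℂ)
    (σ : EuclideanSpace ℂ (Fin n) → Matrix (Fin d) (Fin d) ℂ)
    (hσ : ∀ z, σ z = ∑ k, z k • T k)
    (Ω : Set (EuclideanSpace ℂ (Fin n)))
    (hΩ : Ω = {z : EuclideanSpace ℂ (Fin n) | l2OpNorm (σ z) < 1})
    (lam : Fin m → EuclideanSpace ℂ (Fin n)) (hlam : ∀ j, lam j ∈ Ω)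
    (w : Fin m → ℂ) (v : Fin m → Matrix (Fin 1) (Fin d) ℂ)
    (hNP : ∀ i j : Fin m,
      !![1 - w i * (starRingEnd ℂ) (w j)] =
        v i * ((1 : Matrix (Fin d) (Fin d) ℂ) - σ (lam i) * (σ (lam j))ᴴ) * (v j)ᴴ) :
    ∃ f : EuclideanSpace ℂ (Fin n) → ℂ,
      AnalyticOnNhd ℂ f Ω ∧ (∀ z ∈ Ω, ‖f z‖ ≤ 1) ∧
      ∀ j, f (lam j) = w j := by
  set S := transposePencil T
  have hS : ∀ z, S z = toEuclideanCLM (𝕜 := ℂ) (σ z)ᵀ := fun z => by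
    rw [hσ, transposePencil_apply]
  have hball : Set.MapsTo S Ω (Metric.ball 0 1) := fun z hz => by
    rw [hΩ] at hz
    rw [mem_ball_zero_iff, hS]
    exact (norm_toEuclideanCLM_transpose_le _).trans_lt hz
  obtain ⟨U, hU⟩ := LinearIsometry.exists_apply_eq_of_inner_eq _ _
    (inner_eq_of_pick_decomposition hNP)
  refine ⟨U.transferFunction ∘ S, U.analyticOnNhd_transferFunction.comp (S.analyticOnNhd _) hball,
    fun z hz => U.norm_transferFunction_le_one (mem_ball_zero_iff.1 (hball hz)), fun j => ?_⟩
  have hUj : U (toLp 2 (1, S (lam j) (toLp 2 (v j 0)))) = toLp 2 (w j, toLp 2 (v j 0)) := by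
    rw [hS]
    exact hU j
  exact U.transferFunction_eq_of_apply_eq
    (U.isUnit_one_sub_stateBlock_mul (mem_ball_zero_iff.1 (hball (hlam j)))) hUj

/-- sufficiency in Nevanlinna–Pick interpolation for `UC^∞(E)`.
Given matrices `T₁, …, T_n`, `σ(z) = ∑ z_k T_k`, `Ω = {‖σ(z)‖ < 1}`, interpolation nodes
`λ₁, …, λ_m ∈ Ω`, targets `w₁, …, w_m ∈ ℂ`, and row vectors `v₁, …, v_m` with
`1 − w_i \overline{w_j} = v_i (I − σ(λ_i)σ(λ_j)*) v_j*`, there is an analytic function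
`f : Ω → ℂ`, bounded by `1` on `Ω`, with `f(λ_j) = w_j` for all `j`. -/
theorem statement12
    {n d m : ℕ} (hn : 0 < n) (hd : 0 < d) (hm : 0 < m)
    (T : Fin n → Matrix (Fin d) (Fin d) ℂ)
    (σ : EuclideanSpace ℂ (Fin n) → Matrix (Fin d) (Fin d) ℂ)
    (hσ : ∀ z, σ z = ∑ k, z k • T k)
    (Ω : Set (EuclideanSpace ℂ (Fin n)))
    (hΩ : Ω = {z : EuclideanSpace ℂ (Fin n) | l2OpNorm (σ z) < 1})
    (lam : Fin m → EuclideanSpace ℂ (Fin n)) (hlam : ∀ j, lam j ∈ Ω)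
    (w : Fin m → ℂ) (v : Fin m → Matrix (Fin 1) (Fin d) ℂ)
    (hNP : ∀ i j : Fin m,
      !![1 - w i * (starRingEnd ℂ) (w j)] =
        v i * ((1 : Matrix (Fin d) (Fin d) ℂ) - σ (lam i) * (σ (lam j))ᴴ) * (v j)ᴴ) :
    ∃ f : EuclideanSpace ℂ (Fin n) → ℂ,
      AnalyticOnNhd ℂ f Ω ∧ (∀ z ∈ Ω, ‖f z‖ ≤ 1) ∧
      ∀ j, f (lam j) = w j :=
  statement12_general T σ hσ Ω hΩ lam hlam w v hNP
end
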